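/- Let G be a countable group and A a finite alphabet. Let τ : A^G → A^G be a stably injective NUCA with finite memory. Then the following are equivalent: (i) τ is surjective; (ii) τ is invertible; (iii) τ is stably invertible. -/

import Mathlib

open Function Set Pointwise

section Defs

variable {G A S : Type*} [Group G]

/-- The NUCA `σ_s : A^G → A^G` determined by the configuration of local
defining maps `s ∈ S^G`, `S = A^(A^M)`:
`σ_s(x)(g) = s(g)((g⁻¹x)|_M)` where `(g⁻¹x)(h) = x(gh)`. -/
def nuca {M : Finset G} (s : G → ((M → A) → A)) : (G → A) → (G → A) :=
  fun x g => s g fun m => x (g * (m : G))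

/-- The closure, in the prodiscrete topology on `S^G`, of the shift orbit
`{gs : g ∈ G}`, where `(gs)(h) = s(g⁻¹h)`. -/
def orbitClosure (s : G → S) : Set (G → S) :=
  @closure (G → S) (@Pi.topologicalSpace G (fun _ => S) fun _ => ⊥)
    {p | ∃ g : G, p = fun h => s (g⁻¹ * h)}

/-- `τ` is a NUCA with finite memory. -/
def IsNUCAFin (τ : (G → A) → (G → A)) : Prop :=
  ∃ (M : Finset G) (s : G → ((M → A) → A)), τ = nuca s

/-- `τ` is invertible: it is bijective and its inverse is a NUCA with finite memory. -/
def IsInvertibleNUCA (τ : (G → A) → (G → A)) : Prop :=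
  Function.Bijective τ ∧ ∃ ρ : (G → A) → (G → A), IsNUCAFin ρ ∧
    Function.LeftInverse ρ τ ∧ Function.RightInverse ρ τ

/-- `σ_s` is stably injective: `σ_p` is injective for every `p ∈ Σ(s)`. -/
def StablyInjective {M : Finset G} (s : G → ((M → A) → A)) : Prop :=
  ∀ p ∈ orbitClosure s, Function.Injective (nuca p)

/-- `σ_s` is stably invertible. -/
def StablyInvertible {M : Finset G} (s : G → ((M → A) → A)) : Prop :=
  ∃ (N : Finset G) (t : G → ((N → A) → A)),
    ∀ p ∈ orbitClosure s, ∃ q ∈ orbitClosure t,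
      nuca p ∘ nuca q = id ∧ nuca q ∘ nuca p = id

/-- Two configurations are asymptotic if they agree outside a finite set. -/
def Asymptotic (x y : G → S) : Prop :=
  ∃ Ω : Finset G, ∀ g ∉ Ω, x g = y g

/-- `s` is asymptotically constant. -/
def AsymptoticallyConstant (s : G → S) : Prop :=
  ∃ c : S, Asymptotic s fun _ => c

/-- `τ` is pre-injective. -/
def PreInjective (τ : (G → A) → (G → A)) : Prop :=
  ∀ x y : G → A, Asymptotic x y → τ x = τ y → x = y

/-- `τ` is post-surjective. -/
def PostSurjective (τ : (G → A) → (G → A)) : Prop :=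
  ∀ x y : G → A, Asymptotic y (τ x) → ∃ z : G → A, Asymptotic z x ∧ τ z = y

/-- `σ_s` is stably post-surjective: `σ_p` is post-surjective for all `p ∈ Σ(s)`. -/
def StablyPostSurjective {M : Finset G} (s : G → ((M → A) → A)) : Prop :=
  ∀ p ∈ orbitClosure s, PostSurjective (nuca p)

/-- `τ` is a cellular automaton: a NUCA with finite memory and a constant
configuration of local defining maps. -/
def IsCellularAutomaton (τ : (G → A) → (G → A)) : Prop :=
  ∃ (M : Finset G) (μ : (M → A) → A), τ = nuca fun _ : G => μ

/-- `G` is surjunctive: over every finite alphabet, injective CA are surjective. -/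
def Surjunctive (G : Type*) [Group G] : Prop :=
  ∀ (B : Type) [Fintype B] (τ : (G → B) → (G → B)),
    IsCellularAutomaton τ → Function.Injective τ → Function.Surjective τ

/-- `G` is post-injunctive: over every finite alphabet, post-surjective CA are
pre-injective. -/
def PostInjunctive (G : Type*) [Group G] : Prop :=
  ∀ (B : Type) [Fintype B] (τ : (G → B) → (G → B)),
    IsCellularAutomaton τ → PostSurjective τ → PreInjective τ

/-- `s` has uniformly bounded singularity: for every finite symmetric `E ∋ 1`
there is a finite `F ⊇ E` such that `s` is constant on `FE ∖ F`. -/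
def UniformlyBoundedSingularity (s : G → S) : Prop :=
  ∀ E : Finset G, (1 : G) ∈ E → (∀ g ∈ E, g⁻¹ ∈ E) →
    ∃ F : Finset G, E ⊆ F ∧ ∃ c : S,
      ∀ g ∈ ((F : Set G) * (E : Set G)) \ (F : Set G), s g = c

end Defs

/-!
With the discrete topology on `A`, the spaces `A^G` and `S^G` are compact, `(p, x) ↦ σ_p x` is
continuous and `Σ(s)` is closed. Compactness gives two facts: surjectivity of `σ_s` passes to
every `σ_p` with `p ∈ Σ(s)` (the surjective ones form a closed shift-invariant set), and stable
injectivity is uniform: one finite `N` lets every `σ_p`, `p ∈ Σ(s)`, recover `x 1` from `σ_p x`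
on `N`. Recovering `x g` from `σ_p x` on `gN` is then a local rule that depends only on `p` on
`gN`, so the inverse configuration is the image of `p` under a sliding block code and lies in
`Σ(t)` for `t` the image of `s`. It inverts `σ_p` on the left, and on the right because `σ_p`
is surjective.
-/

section OrbitClosure

variable {G S T : Type*} [Group G]

theorem orbitClosure_eq_closure [TopologicalSpace S] [DiscreteTopology S] (s : G → S) :
    orbitClosure s = closure (range fun g h => s (g⁻¹ * h)) := by
  obtain rfl := ‹DiscreteTopology S›.eq_bot
  simp only [orbitClosure, range, eq_comm]

theorem self_mem_orbitClosure (s : G → S) : s ∈ orbitClosure s := by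
  let _ : TopologicalSpace S := ⊥
  have _ := discreteTopology_bot S
  rw [orbitClosure_eq_closure]
  exact subset_closure ⟨1, by simp⟩

theorem shift_mem_orbitClosure {s p : G → S} (hp : p ∈ orbitClosure s) (g : G) :
    (fun h => p (g * h)) ∈ orbitClosure s := by
  let _ : TopologicalSpace S := ⊥
  have _ := discreteTopology_bot S
  rw [orbitClosure_eq_closure] at hp ⊢
  refine map_mem_closure (continuous_pi fun h => continuous_apply _) hp ?_
  rintro _ ⟨k, rfl⟩
  exact ⟨g⁻¹ * k, by simp [mul_assoc]⟩

def slidingBlockCode (N : Finset G) (μ : (N → S) → T) (p : G → S) : G → T :=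
  fun g => μ fun n => p (g * n)

theorem slidingBlockCode_mem_orbitClosure {N : Finset G} (μ : (N → S) → T) {s p : G → S}
    (hp : p ∈ orbitClosure s) :
    slidingBlockCode N μ p ∈ orbitClosure (slidingBlockCode N μ s) := by
  let _ : TopologicalSpace S := ⊥
  have _ := discreteTopology_bot S
  let _ : TopologicalSpace T := ⊥
  have _ := discreteTopology_bot T
  rw [orbitClosure_eq_closure] at hp ⊢
  refine map_mem_closure ?_ hp ?_
  · exact continuous_pi fun g => continuous_of_discreteTopology.comp
      (continuous_pi fun n => continuous_apply _)
  · rintro _ ⟨k, rfl⟩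
    exact ⟨k, by ext; simp [slidingBlockCode, mul_assoc]⟩

end OrbitClosure

section Nuca

variable {G A : Type*} [Group G] {M : Finset G}

theorem nuca_shift (p : G → (M → A) → A) (x : G → A) (g k : G) :
    nuca (fun h => p (g * h)) (fun h => x (g * h)) k = nuca p x (g * k) := by
  simp [nuca, mul_assoc]

theorem continuous_nuca_apply [TopologicalSpace A] [DiscreteTopology A] [Finite A] (g : G) :
    Continuous fun px : (G → (M → A) → A) × (G → A) => nuca px.1 px.2 g := by
  change Continuous ((fun q : ((M → A) → A) × (M → A) => q.1 q.2) ∘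
    fun px : (G → (M → A) → A) × (G → A) => (px.1 g, fun m : M => px.2 (g * m)))
  exact continuous_of_discreteTopology.comp (by fun_prop)

theorem surjective_nuca_of_mem_orbitClosure [Finite A] {s p : G → (M → A) → A}
    (hs : Surjective (nuca s)) (hp : p ∈ orbitClosure s) : Surjective (nuca p) := by
  let _ : TopologicalSpace A := ⊥
  have _ := discreteTopology_bot A
  rw [orbitClosure_eq_closure] at hp
  have hclosed : IsClosed {p : G → (M → A) → A | Surjective (nuca p)} := by
    have hsurj : {p : G → (M → A) → A | Surjective (nuca p)} =
        ⋂ y, Prod.fst '' {px : (G → (M → A) → A) × (G → A) | nuca px.1 px.2 = y} := by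
      ext; simp [Surjective]
    rw [hsurj]
    exact isClosed_iInter fun y => isClosedMap_fst_of_compactSpace _
      (isClosed_eq (continuous_pi continuous_nuca_apply) continuous_const)
  refine closure_minimal ?_ hclosed hp
  rintro _ ⟨g, rfl⟩ y
  obtain ⟨x, hx⟩ := hs fun h => y (g * h)
  exact ⟨fun h => x (g⁻¹ * h), funext fun k => by simp [nuca_shift, hx]⟩

def IsInverseMemorySet (s : G → (M → A) → A) (N : Finset G) : Prop :=
  ∀ p ∈ orbitClosure s, ∀ x y : G → A, (∀ g ∈ N, nuca p x g = nuca p y g) → x 1 = y 1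

theorem IsInverseMemorySet.mono {s : G → (M → A) → A} {N N' : Finset G}
    (hN : IsInverseMemorySet s N) (hNN' : N ⊆ N') : IsInverseMemorySet s N' :=
  fun p hp x y hxy => hN p hp x y fun g hg => hxy g (hNN' hg)

theorem StablyInjective.exists_isInverseMemorySet [Finite A] {s : G → (M → A) → A}
    (hinj : StablyInjective s) : ∃ N, IsInverseMemorySet s N := by
  let _ : TopologicalSpace A := ⊥
  have _ := discreteTopology_bot A
  let U : Finset G → Set ((G → (M → A) → A) × (G → A) × (G → A)) := fun N =>
    (⋂ g ∈ N, {w | nuca w.1 w.2.1 g = nuca w.1 w.2.2 g})ᶜ ∪ {w | w.2.1 1 = w.2.2 1}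
  have hU : ∀ N, IsOpen (U N) := by
    intro N
    have hagree : ∀ g, IsClosed {w : (G → (M → A) → A) × (G → A) × (G → A) |
        nuca w.1 w.2.1 g = nuca w.1 w.2.2 g} := fun g =>
      isClosed_eq ((continuous_nuca_apply g).comp (continuous_fst.prodMk continuous_snd.fst))
        ((continuous_nuca_apply g).comp (continuous_fst.prodMk continuous_snd.snd))
    have hone : IsOpen {w : (G → (M → A) → A) × (G → A) × (G → A) | w.2.1 1 = w.2.2 1} :=
      IsOpen.preimage
        (f := fun w : (G → (M → A) → A) × (G → A) × (G → A) => (w.2.1 1, w.2.2 1))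
        (by fun_prop) (isOpen_discrete {a : A × A | a.1 = a.2})
    exact (isClosed_biInter fun g _ => hagree g).isOpen_compl.union hone
  have hcover : orbitClosure s ×ˢ univ ⊆ ⋃ N, U N := by
    rintro ⟨p, x, y⟩ ⟨hp, -⟩
    by_cases h1 : x 1 = y 1
    · exact mem_iUnion.2 ⟨∅, Or.inr h1⟩
    · obtain ⟨g, hg⟩ := Function.ne_iff.1 ((hinj p hp).ne fun hxy => h1 (congrFun hxy 1))
      exact mem_iUnion.2
        ⟨{g}, Or.inl fun h => hg (mem_iInter₂.1 h g (Finset.mem_singleton_self g))⟩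
  have hmono : Monotone U := fun N N' hNN' =>
    union_subset_union_left _ (compl_subset_compl.2 (biInter_subset_biInter_left hNN'))
  have hclosed : IsClosed (orbitClosure s) := orbitClosure_eq_closure s ▸ isClosed_closure
  obtain ⟨N, hN⟩ := (hclosed.isCompact.prod isCompact_univ).elim_directed_cover U hU hcover
    hmono.directed_le
  refine ⟨N, fun p hp x y hxy => ?_⟩
  have hpxy : (p, x, y) ∈ U N := hN ⟨hp, trivial⟩
  exact hpxy.resolve_left (not_not.2 (mem_iInter₂.2 hxy))

open Classical in
/-- `π` stands for the local rules of `p` on `gN` and `c` for `σ_p x` on `gN`, both translated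
back to `N`. The fallback `c ⟨1, h1⟩` is never reached on such patterns; it only spares us
assuming `A` nonempty. -/
noncomputable def inverseRule {N : Finset G} (h1 : (1 : G) ∈ N) (π : N → (M → A) → A)
    (c : N → A) : A :=
  if h : ∃ x : G → A, ∀ n : N, π n (fun m => x (n * m)) = c n then h.choose 1 else c ⟨1, h1⟩

theorem IsInverseMemorySet.nuca_slidingBlockCode_inverseRule {s p : G → (M → A) → A}
    {N : Finset G} (hN : IsInverseMemorySet s N) (h1 : (1 : G) ∈ N) (hp : p ∈ orbitClosure s)
    (x : G → A) : nuca (slidingBlockCode N (inverseRule h1) p) (nuca p x) = x := by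
  funext g
  have hex : ∃ z : G → A, ∀ n : N, p (g * n) (fun m => z (n * m)) = nuca p x (g * n) :=
    ⟨fun k => x (g * k), fun n => by simp [nuca, mul_assoc]⟩
  change inverseRule h1 (fun n => p (g * n)) (fun n => nuca p x (g * n)) = x g
  rw [inverseRule, dif_pos hex]
  have hg := hN _ (shift_mem_orbitClosure hp g) hex.choose (fun k => x (g * k)) fun n hn => by
    rw [nuca_shift]
    exact hex.choose_spec ⟨n, hn⟩
  simpa using hg

theorem StablyInjective.stablyInvertible_of_surjective [Finite A] {s : G → (M → A) → A}
    (hinj : StablyInjective s) (hs : Surjective (nuca s)) : StablyInvertible s := by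
  classical
  obtain ⟨N, hN⟩ := hinj.exists_isInverseMemorySet
  have h1 : (1 : G) ∈ insert 1 N := Finset.mem_insert_self 1 N
  have hleft : ∀ p ∈ orbitClosure s, ∀ x,
      nuca (slidingBlockCode _ (inverseRule h1) p) (nuca p x) = x := fun _ hp =>
    (hN.mono (Finset.subset_insert 1 N)).nuca_slidingBlockCode_inverseRule h1 hp
  refine ⟨insert 1 N, slidingBlockCode _ (inverseRule h1) s, fun p hp =>
    ⟨_, slidingBlockCode_mem_orbitClosure _ hp, funext fun y => ?_, funext (hleft p hp)⟩⟩
  obtain ⟨x, rfl⟩ := surjective_nuca_of_mem_orbitClosure hs hp y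
  exact congrArg (nuca p) (hleft p hp x)

theorem StablyInvertible.isInvertibleNUCA {s : G → (M → A) → A} (hs : StablyInvertible s) :
    IsInvertibleNUCA (nuca s) := by
  obtain ⟨N, t, ht⟩ := hs
  obtain ⟨q, -, hright, hleft⟩ := ht s (self_mem_orbitClosure s)
  have hl : LeftInverse (nuca q) (nuca s) := congrFun hleft
  have hr : RightInverse (nuca q) (nuca s) := congrFun hright
  exact ⟨⟨hl.injective, hr.surjective⟩, nuca q, ⟨N, q, rfl⟩, hl, hr⟩

end Nuca

theorem stablyInjective_surjective_iff_invertible_iff_stablyInvertible_general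
    {G A : Type*} [Group G] [Fintype A]
    {M : Finset G} (s : G → ((M → A) → A))
    (hinj : StablyInjective s) :
    (Function.Surjective (nuca s) ↔ IsInvertibleNUCA (nuca s)) ∧
    (IsInvertibleNUCA (nuca s) ↔ StablyInvertible s) := by
  have hsurj : Surjective (nuca s) → StablyInvertible s := hinj.stablyInvertible_of_surjective
  exact ⟨⟨fun h => (hsurj h).isInvertibleNUCA, fun h => h.1.2⟩,
    ⟨fun h => hsurj h.1.2, StablyInvertible.isInvertibleNUCA⟩⟩

/-- for a stably injective NUCA with finite memory over a countable
group and finite alphabet, surjectivity, invertibility and stable invertibility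
are equivalent. -/
theorem stablyInjective_surjective_iff_invertible_iff_stablyInvertible
    {G A : Type*} [Group G] [Countable G] [Fintype A]
    {M : Finset G} (s : G → ((M → A) → A))
    (hinj : StablyInjective s) :
    (Function.Surjective (nuca s) ↔ IsInvertibleNUCA (nuca s)) ∧
    (IsInvertibleNUCA (nuca s) ↔ StablyInvertible s) :=
  stablyInjective_surjective_iff_invertible_iff_stablyInvertible_general s hinj
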